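/- For any MAC W on finite alphabets, the capacity region with independent non-signaling assistance (shared only between each sender and the receiver separately) equals the unassisted capacity region: C^{NS_SR}(W) = C(W). -/

import Mathlib

open Finset Filter Topology

section Defs

variable {X1 X2 Y : Type*}

/-- The `n`-fold memoryless extension `W^{⊗n}` of a multiple-access channel `W`. -/
def macPow (n : ℕ) (W : X1 → X2 → Y → ℝ) :
    (Fin n → X1) → (Fin n → X2) → (Fin n → Y) → ℝ :=
  fun x1 x2 y => ∏ i, W (x1 i) (x2 i) (y i)

/-- `S(W,k1,k2)`: maximum joint success probability over classical (unassisted)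
stochastic encoders and decoder. -/
noncomputable def S [Fintype X1] [Fintype X2] [Fintype Y]
    (W : X1 → X2 → Y → ℝ) (k1 k2 : ℕ) : ℝ :=
  sSup {s : ℝ | ∃ (e1 : Fin k1 → X1 → ℝ) (e2 : Fin k2 → X2 → ℝ)
      (d : Y → Fin k1 → Fin k2 → ℝ),
    (∀ i1 x1, 0 ≤ e1 i1 x1) ∧ (∀ i1, ∑ x1, e1 i1 x1 = 1) ∧
    (∀ i2 x2, 0 ≤ e2 i2 x2) ∧ (∀ i2, ∑ x2, e2 i2 x2 = 1) ∧
    (∀ y j1 j2, 0 ≤ d y j1 j2) ∧ (∀ y, ∑ j1, ∑ j2, d y j1 j2 = 1) ∧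
    s = (1 / ((k1 : ℝ) * (k2 : ℝ))) * ∑ i1, ∑ i2, ∑ x1, ∑ x2, ∑ y,
      W x1 x2 y * e1 i1 x1 * e2 i2 x2 * d y i1 i2}

/-- A bipartite non-signaling box `P(x,j|i,y)` between one sender and the receiver,
with `k` messages.  Arguments of `P` are in the order `x j i y`. -/
def IsNSBox1 {X Y : Type*} [Fintype X] [Fintype Y] (k : ℕ)
    (P : X → Fin k → Fin k → Y → ℝ) : Prop :=
  (∀ x j i y, 0 ≤ P x j i y) ∧
  (∀ i y, ∑ x, ∑ j, P x j i y = 1) ∧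
  (∀ j i i' y, ∑ x, P x j i y = ∑ x, P x j i' y) ∧
  (∀ x i y y', ∑ j, P x j i y = ∑ j, P x j i y')

/-- `S^{NS_SR}(W,k1,k2)`: maximum joint success probability with independent
non-signaling assistance between each sender and the receiver. -/
noncomputable def SNSsr [Fintype X1] [Fintype X2] [Fintype Y]
    (W : X1 → X2 → Y → ℝ) (k1 k2 : ℕ) : ℝ :=
  sSup {s : ℝ | ∃ (P1 : X1 → Fin k1 → Fin k1 → Y → ℝ) (P2 : X2 → Fin k2 → Fin k2 → Y → ℝ),
    IsNSBox1 k1 P1 ∧ IsNSBox1 k2 P2 ∧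
    s = (1 / ((k1 : ℝ) * (k2 : ℝ))) * ∑ i1, ∑ i2, ∑ x1, ∑ x2, ∑ y,
      W x1 x2 y * P1 x1 i1 i1 y * P2 x2 i2 i2 y}

/-- `⌈2^{R n}⌉`, the number of messages at rate `R` for blocklength `n`. -/
noncomputable def nMsg (R : ℝ) (n : ℕ) : ℕ := ⌈(2 : ℝ) ^ (R * (n : ℝ))⌉₊

/-- The (unassisted) capacity region `C(W)`. -/
noncomputable def capacityRegion [Fintype X1] [Fintype X2] [Fintype Y]
    (W : X1 → X2 → Y → ℝ) : Set (ℝ × ℝ) :=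
  closure {p : ℝ × ℝ |
    Tendsto (fun n : ℕ => S (macPow n W) (nMsg p.1 n) (nMsg p.2 n)) atTop (𝓝 1)}

/-- The independent non-signaling assisted capacity region `C^{NS_SR}(W)`. -/
noncomputable def capacityRegionNSsr [Fintype X1] [Fintype X2] [Fintype Y]
    (W : X1 → X2 → Y → ℝ) : Set (ℝ × ℝ) :=
  closure {p : ℝ × ℝ |
    Tendsto (fun n : ℕ => SNSsr (macPow n W) (nMsg p.1 n) (nMsg p.2 n)) atTop (𝓝 1)}

end Defs

/-!
An independent non-signaling box of sender `i` only matters through an input distribution `pᵢ`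
and a test `gᵢ(x, y) ∈ [0, 1]` which a codeword drawn from `pᵢ` independently of the output
passes with probability at most `1 / kᵢ`; its success probability is
`∑ W(y | x₁, x₂) p₁ g₁ p₂ g₂`. Drawing `kᵢ'` codewords i.i.d. from `pᵢ` and decoding by a
normalised vote of the tests turns this into a classical code, losing at most `(kᵢ' - 1) / kᵢ`
per sender (the false acceptances of the other codewords). Rounding the two senders one after
the other gives `S^{NS_SR}(W, k₁, k₂) ≤ S(W, k₁', k₂') + (k₁' - 1) / k₁ + (k₂' - 1) / k₂`, which is
exponentially small at rates `Rᵢ - δ`. Conversely, replacing a classical decoder by the product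
of its two marginals shows `2 S - 1 ≤ S^{NS_SR}`.
-/

section Codebook

variable {ι κ : Type*} [Fintype ι] [DecidableEq ι] [Fintype κ] {p : κ → ℝ}

theorem sum_prod_mul_prod (p : κ → ℝ) (f : ι → κ → ℝ) :
    ∑ c : ι → κ, (∏ m, p (c m)) * ∏ m, f m (c m) = ∏ m, ∑ x, p x * f m x := by
  simp_rw [Fintype.prod_sum (fun m x => p x * f m x), prod_mul_distrib]

theorem sum_prod_eq_one (hp : ∑ x, p x = 1) : ∑ c : ι → κ, ∏ m, p (c m) = 1 := by
  simp [← Fintype.prod_sum, hp]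

theorem sum_prod_mul_apply (hp : ∑ x, p x = 1) (j : ι) (F : κ → ℝ) :
    ∑ c : ι → κ, (∏ m, p (c m)) * F (c j) = ∑ x, p x * F x := by
  have h := sum_prod_mul_prod (ι := ι) p (fun m x => if m = j then F x else 1)
  simp only [Fintype.prod_ite_eq'] at h
  rw [h, Fintype.prod_eq_single j fun m hm => by simp [hm, hp]]
  simp

theorem sum_prod_mul_apply_mul_apply (hp : ∑ x, p x = 1) {j l : ι} (hjl : j ≠ l)
    (F G : κ → ℝ) :
    ∑ c : ι → κ, (∏ m, p (c m)) * (F (c j) * G (c l)) =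
      (∑ x, p x * F x) * ∑ x, p x * G x := by
  have h := sum_prod_mul_prod (ι := ι) p
    (fun m x => if m = j then F x else if m = l then G x else 1)
  have hFG : ∀ c : ι → κ, (∏ m, if m = j then F (c m) else if m = l then G (c m) else 1) =
      F (c j) * G (c l) := fun c => by
    rw [Fintype.prod_eq_mul j l hjl fun m hm => by simp [hm]]
    simp [hjl.symm]
  simp only [hFG] at h
  rw [h, Fintype.prod_eq_mul j l hjl fun m hm => by simp [hm, hp]]
  simp [hjl.symm]

end Codebook

theorem exists_le_of_le_sum_mul {ι : Type*} [Fintype ι] {w f : ι → ℝ} (hw0 : ∀ i, 0 ≤ w i)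
    (hw1 : ∑ i, w i = 1) {b : ℝ} (h : b ≤ ∑ i, w i * f i) : ∃ i, b ≤ f i := by
  by_contra! hlt
  obtain ⟨i, -, hi⟩ := exists_lt_of_sum_lt (s := univ) (f := fun _ => (0 : ℝ))
    (g := w) (by simp [hw1])
  have : ∑ i, w i * f i < ∑ i, w i * b :=
    sum_lt_sum (fun i _ => mul_le_mul_of_nonneg_left (hlt i).le (hw0 i))
      ⟨i, mem_univ i, mul_lt_mul_of_pos_left (hlt i) hi⟩
  rw [← sum_mul, hw1, one_mul] at this
  linarith

theorem exists_stochastic_ge_sub_sum_erase {ι : Type*} [Fintype ι] [DecidableEq ι]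
    [Nonempty ι] {g : ι → ℝ} (h0 : ∀ i, 0 ≤ g i) (h1 : ∀ i, g i ≤ 1) :
    ∃ D : ι → ℝ, (∀ i, 0 ≤ D i) ∧ ∑ i, D i = 1 ∧
      ∀ i, g i - ∑ l ∈ univ.erase i, g l ≤ D i := by
  obtain ⟨i₀⟩ := ‹Nonempty ι›
  obtain ⟨M, hM1, hsM, hMc⟩ : ∃ M, 1 ≤ M ∧ ∑ i, g i ≤ M ∧ (M = 1 ∨ M = ∑ i, g i) :=
    ⟨max 1 _, le_max_left _ _, le_max_right _ _, max_choice _ _⟩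
  have hM : 0 < M := one_pos.trans_le hM1
  have hsM' : (∑ i, g i) / M ≤ 1 := div_le_one_of_le₀ hsM hM.le
  refine ⟨fun i => g i / M + if i = i₀ then 1 - (∑ i, g i) / M else 0, fun i => ?_, ?_,
    fun i => ?_⟩
  · have := div_nonneg (h0 i) hM.le
    dsimp only
    split_ifs <;> linarith
  · rw [sum_add_distrib, ← sum_div, sum_ite_eq']
    simp
  · have hgi : g i ≤ ∑ l, g l := single_le_sum (fun l _ => h0 l) (mem_univ i)
    -- normalising by `max 1 (∑ g)` costs at most `∑ g - g i` because `g i ≤ 1`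
    have key : g i - (∑ l, g l - g i) ≤ g i / M := by
      rw [le_div_iff₀ hM]
      rcases hMc with rfl | rfl
      · linarith
      · nlinarith [h1 i, h0 i]
    rw [sum_erase_eq_sub (mem_univ i)]
    dsimp only
    split_ifs <;> linarith

theorem one_div_card_mul_sum_le_one {ι : Type*} [Fintype ι] {q : ι → ℝ} (hq : ∀ i, q i ≤ 1) :
    1 / (Fintype.card ι : ℝ) * ∑ i, q i ≤ 1 := by
  calc _ ≤ 1 / (Fintype.card ι : ℝ) * Fintype.card ι := by
        gcongr
        simpa using sum_le_sum fun i (_ : i ∈ univ) => hq i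
    _ ≤ 1 := by rw [one_div_mul_eq_div]; exact div_self_le_one _

theorem one_div_mul_sum_le_one {k : ℕ} {q : Fin k → ℝ} (hq : ∀ i, q i ≤ 1) :
    1 / (k : ℝ) * ∑ i, q i ≤ 1 := by
  simpa using one_div_card_mul_sum_le_one hq

theorem one_div_mul_sum_sum_le_one {k1 k2 : ℕ} {q : Fin k1 → Fin k2 → ℝ}
    (hq : ∀ i1 i2, q i1 i2 ≤ 1) :
    1 / ((k1 : ℝ) * k2) * ∑ i1, ∑ i2, q i1 i2 ≤ 1 := by
  simpa [Fintype.sum_prod_type'] using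
    one_div_card_mul_sum_le_one (ι := Fin k1 × Fin k2) fun i => hq i.1 i.2

theorem cast_sub_one_div_nonneg {k k' : ℕ} (hk' : 0 < k') : 0 ≤ ((k' : ℝ) - 1) / k :=
  div_nonneg (sub_nonneg.mpr (Nat.one_le_cast.mpr hk')) k.cast_nonneg

section Rounding

variable {X Y : Type*} [Fintype X]

/-- `p` is an input distribution and `g x y ∈ [0, 1]` the probability that a test accepts
the codeword `x` on output `y`; a codeword drawn from `p` independently of the output passes
the test with probability at most `ε`. -/
structure IsCodingTest (ε : ℝ) (p : X → ℝ) (g : X → Y → ℝ) : Prop where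
  nonneg : ∀ x, 0 ≤ p x
  sum_eq_one : ∑ x, p x = 1
  test_nonneg : ∀ x y, 0 ≤ g x y
  test_le_one : ∀ x y, g x y ≤ 1
  sum_mul_test_le : ∀ y, ∑ x, p x * g x y ≤ ε

variable {ε : ℝ} {p : X → ℝ} {g : X → Y → ℝ}

theorem IsCodingTest.sub_mul_le_sum_prod_mul (hpg : IsCodingTest ε p g) {V : X → Y → ℝ}
    (hV : ∀ x y, 0 ≤ V x y) {k : ℕ} (j : Fin k) (y : Y) :
    ∑ x, p x * (V x y * g x y) - ((k : ℝ) - 1) * ε * ∑ x, p x * V x y ≤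
      ∑ c : Fin k → X, (∏ m, p (c m)) *
        (V (c j) y * (g (c j) y - ∑ l ∈ univ.erase j, g (c l) y)) := by
  have hcross : ∀ l ∈ univ.erase j, ∑ c : Fin k → X, (∏ m, p (c m)) * (V (c j) y * g (c l) y) ≤
      (∑ x, p x * V x y) * ε := fun l hl => by
    rw [sum_prod_mul_apply_mul_apply hpg.sum_eq_one (ne_of_mem_erase hl).symm
      (fun x => V x y) (fun x => g x y)]
    exact mul_le_mul_of_nonneg_left (hpg.sum_mul_test_le y)
      (sum_nonneg fun x _ => mul_nonneg (hpg.nonneg x) (hV x y))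
  have hsum := sum_le_sum hcross
  rw [sum_const, card_erase_of_mem (mem_univ j), card_univ, Fintype.card_fin, nsmul_eq_mul,
    Nat.cast_sub j.pos, Nat.cast_one] at hsum
  calc _ ≤ ∑ c : Fin k → X, (∏ m, p (c m)) * (V (c j) y * g (c j) y) -
        ∑ l ∈ univ.erase j, ∑ c : Fin k → X, (∏ m, p (c m)) * (V (c j) y * g (c l) y) := by
        rw [sum_prod_mul_apply hpg.sum_eq_one j fun x => V x y * g x y]
        linarith
    _ = _ := by
        simp only [mul_sub, mul_sum, sum_sub_distrib]
        rw [sum_comm (s := univ.erase j)]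

theorem IsCodingTest.exists_codebook [Fintype Y] (hpg : IsCodingTest ε p g) (hε : 0 ≤ ε)
    {V : X → Y → ℝ} (hV0 : ∀ x y, 0 ≤ V x y) (hV1 : ∀ x, ∑ y, V x y ≤ 1) {k : ℕ}
    (hk : 0 < k) :
    ∃ (c : Fin k → X) (D : Y → Fin k → ℝ), (∀ y j, 0 ≤ D y j) ∧ (∀ y, ∑ j, D y j = 1) ∧
      ∑ x, ∑ y, V x y * (p x * g x y) - ((k : ℝ) - 1) * ε ≤
        1 / (k : ℝ) * ∑ j, ∑ y, V (c j) y * D y j := by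
  have : Nonempty (Fin k) := ⟨⟨0, hk⟩⟩
  choose D hD0 hD1 hDg using fun (c : Fin k → X) y =>
    exists_stochastic_ge_sub_sum_erase (g := fun j => g (c j) y)
      (fun j => hpg.test_nonneg _ y) (fun j => hpg.test_le_one _ y)
  set b := ∑ x, ∑ y, V x y * (p x * g x y) - ((k : ℝ) - 1) * ε
  have hw0 : ∀ c : Fin k → X, 0 ≤ ∏ m, p (c m) := fun c => prod_nonneg fun m _ => hpg.nonneg _
  have hk1 : (0 : ℝ) ≤ k - 1 := sub_nonneg.mpr (Nat.one_le_cast.mpr hk)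
  have hpV : ∑ y, ∑ x, p x * V x y ≤ 1 := by
    rw [sum_comm]
    calc ∑ x, ∑ y, p x * V x y ≤ ∑ x, p x := sum_le_sum fun x _ => by
          rw [← mul_sum]; exact mul_le_of_le_one_right (hpg.nonneg x) (hV1 x)
      _ = 1 := hpg.sum_eq_one
  have hmsg : ∀ j, b ≤ ∑ c : Fin k → X, (∏ m, p (c m)) * ∑ y, V (c j) y * D c y j := by
    intro j
    calc b ≤ ∑ y, (∑ x, p x * (V x y * g x y) - ((k : ℝ) - 1) * ε * ∑ x, p x * V x y) := by
          have := mul_le_mul_of_nonneg_left hpV (mul_nonneg hk1 hε)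
          rw [sum_sub_distrib, ← mul_sum, sum_comm]
          simp only [b, mul_left_comm (p _)]
          linarith
      _ ≤ ∑ y, ∑ c : Fin k → X, (∏ m, p (c m)) *
            (V (c j) y * (g (c j) y - ∑ l ∈ univ.erase j, g (c l) y)) :=
          sum_le_sum fun y _ => hpg.sub_mul_le_sum_prod_mul hV0 j y
      _ ≤ ∑ y, ∑ c : Fin k → X, (∏ m, p (c m)) * (V (c j) y * D c y j) :=
          sum_le_sum fun y _ => sum_le_sum fun c _ => mul_le_mul_of_nonneg_left
            (mul_le_mul_of_nonneg_left (hDg c y j) (hV0 _ _)) (hw0 c)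
      _ = _ := by rw [sum_comm]; simp_rw [mul_sum]
  have havg : b ≤ ∑ c : Fin k → X, (∏ m, p (c m)) *
      (1 / (k : ℝ) * ∑ j, ∑ y, V (c j) y * D c y j) := by
    calc b = 1 / (k : ℝ) * ∑ _j : Fin k, b := by
          rw [sum_const, card_univ, Fintype.card_fin, nsmul_eq_mul]
          field_simp
      _ ≤ 1 / (k : ℝ) * ∑ j, ∑ c : Fin k → X, (∏ m, p (c m)) * ∑ y, V (c j) y * D c y j := by
          gcongr with j; exact hmsg j
      _ = _ := by simp_rw [mul_sum]; rw [sum_comm]; simp_rw [mul_left_comm]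
  obtain ⟨c, hc⟩ := exists_le_of_le_sum_mul hw0 (sum_prod_eq_one hpg.sum_eq_one) havg
  exact ⟨c, D c, hD0 c, hD1 c, hc⟩

end Rounding

theorem IsNSBox1.exists_isCodingTest {X Y : Type*} [Fintype X] [Fintype Y] [Nonempty Y]
    {k : ℕ} (hk : 0 < k) {P : X → Fin k → Fin k → Y → ℝ} (hP : IsNSBox1 k P) :
    ∃ (p : X → ℝ) (g : X → Y → ℝ), IsCodingTest (1 / (k : ℝ)) p g ∧
      ∀ x y, 1 / (k : ℝ) * ∑ i, P x i i y = p x * g x y := by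
  obtain ⟨hP0, hP1, hPi, hPy⟩ := hP
  obtain ⟨y₀⟩ := ‹Nonempty Y›
  have hk' : (k : ℝ) ≠ 0 := by positivity
  set r : X → Y → ℝ := fun x y => 1 / (k : ℝ) * ∑ i, P x i i y
  -- no signalling from the receiver: the input marginal does not depend on `y`
  set p : X → ℝ := fun x => 1 / (k : ℝ) * ∑ i, ∑ j, P x j i y₀
  have hr0 : ∀ x y, 0 ≤ r x y := fun x y =>
    mul_nonneg (by positivity) (sum_nonneg fun i _ => hP0 x i i y)
  have hrp : ∀ x y, r x y ≤ p x := fun x y => by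
    simp only [r, p]
    gcongr with i
    rw [← hPy x i y y₀]
    exact single_le_sum (fun j _ => hP0 x j i y) (mem_univ i)
  have hpr : ∀ x y, p x * (r x y / p x) = r x y := fun x y => by
    rcases eq_or_ne (p x) 0 with h | h
    · simp [h, le_antisymm ((hrp x y).trans h.le) (hr0 x y)]
    · exact mul_div_cancel₀ _ h
  refine ⟨p, fun x y => r x y / p x, ⟨fun x => (hr0 x y₀).trans (hrp x y₀), ?_,
    fun x y => div_nonneg (hr0 x y) ((hr0 x y).trans (hrp x y)),
    fun x y => div_le_one_of_le₀ (hrp x y) ((hr0 x y).trans (hrp x y)), fun y => ?_⟩,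
    fun x y => (hpr x y).symm⟩
  · simp only [p, ← mul_sum]
    rw [sum_comm, sum_congr rfl fun i _ => hP1 i y₀]
    simp [hk']
  · -- no signalling from the sender: `∑ x, P x i i y` does not depend on `i`
    let i₀ : Fin k := ⟨0, hk⟩
    simp only [hpr, r, ← mul_sum]
    rw [sum_comm, sum_congr rfl fun i _ => hPi i i i₀ y, sum_comm, hP1 i₀ y, mul_one]

theorem isNSBox1_mul {X Y : Type*} [Fintype X] [Fintype Y] {k : ℕ} {e : Fin k → X → ℝ}
    {δ : Y → Fin k → ℝ} (he : ∀ i x, 0 ≤ e i x) (hes : ∀ i, ∑ x, e i x = 1)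
    (hδ : ∀ y j, 0 ≤ δ y j) (hδs : ∀ y, ∑ j, δ y j = 1) :
    IsNSBox1 k fun x j i y => e i x * δ y j :=
  ⟨fun _ _ _ _ => mul_nonneg (he _ _) (hδ _ _),
    fun i y => by simp_rw [← mul_sum, hδs, mul_one, hes],
    fun _ i i' _ => by simp_rw [← sum_mul, hes],
    fun _ _ y y' => by simp_rw [← mul_sum, hδs]⟩

structure IsMAC {X1 X2 Y : Type*} [Fintype Y] (W : X1 → X2 → Y → ℝ) : Prop where
  nonneg : ∀ x1 x2 y, 0 ≤ W x1 x2 y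
  sum_eq_one : ∀ x1 x2, ∑ y, W x1 x2 y = 1

section MultipleAccess

variable {X1 X2 Y : Type*} [Fintype Y] {W : X1 → X2 → Y → ℝ}

theorem IsMAC.macPow (hW : IsMAC W) (n : ℕ) : IsMAC (macPow n W) where
  nonneg _ _ _ := prod_nonneg fun _ _ => hW.nonneg _ _ _
  sum_eq_one x1 x2 := by
    simp only [_root_.macPow]
    rw [← Fintype.prod_sum fun i z => W (x1 i) (x2 i) z]
    exact prod_eq_one fun i _ => hW.sum_eq_one _ _

variable [Fintype X1] [Fintype X2] {k1 k2 : ℕ}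

noncomputable def codeValue (W : X1 → X2 → Y → ℝ) (e1 : Fin k1 → X1 → ℝ) (e2 : Fin k2 → X2 → ℝ)
    (d : Y → Fin k1 → Fin k2 → ℝ) : ℝ :=
  (1 / ((k1 : ℝ) * (k2 : ℝ))) * ∑ i1, ∑ i2, ∑ x1, ∑ x2, ∑ y,
    W x1 x2 y * e1 i1 x1 * e2 i2 x2 * d y i1 i2

noncomputable def nsValue (W : X1 → X2 → Y → ℝ) (P1 : X1 → Fin k1 → Fin k1 → Y → ℝ)
    (P2 : X2 → Fin k2 → Fin k2 → Y → ℝ) : ℝ :=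
  (1 / ((k1 : ℝ) * (k2 : ℝ))) * ∑ i1, ∑ i2, ∑ x1, ∑ x2, ∑ y,
    W x1 x2 y * P1 x1 i1 i1 y * P2 x2 i2 i2 y

theorem sum_mul_mul_eq_one (hW1 : ∀ x1 x2, ∑ y, W x1 x2 y = 1) {e1 : X1 → ℝ} {e2 : X2 → ℝ}
    (he1 : ∑ x1, e1 x1 = 1) (he2 : ∑ x2, e2 x2 = 1) :
    ∑ x1, ∑ x2, ∑ y, W x1 x2 y * e1 x1 * e2 x2 = 1 := by
  simp_rw [← sum_mul, hW1, one_mul, ← mul_sum, he2, mul_one, he1]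

variable {e1 : Fin k1 → X1 → ℝ} {e2 : Fin k2 → X2 → ℝ} {d : Y → Fin k1 → Fin k2 → ℝ}

theorem codeValue_nonneg (hW0 : ∀ x1 x2 y, 0 ≤ W x1 x2 y) (he1 : ∀ i1 x1, 0 ≤ e1 i1 x1)
    (he2 : ∀ i2 x2, 0 ≤ e2 i2 x2) (hd : ∀ y j1 j2, 0 ≤ d y j1 j2) :
    0 ≤ codeValue W e1 e2 d := by
  refine mul_nonneg (by positivity) (sum_nonneg fun i1 _ => sum_nonneg fun i2 _ =>
    sum_nonneg fun x1 _ => sum_nonneg fun x2 _ => sum_nonneg fun y _ => ?_)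
  exact mul_nonneg (mul_nonneg (mul_nonneg (hW0 _ _ _) (he1 _ _)) (he2 _ _)) (hd _ _ _)

theorem codeValue_le_one (hW : IsMAC W)
    (he1 : ∀ i1 x1, 0 ≤ e1 i1 x1) (he1s : ∀ i1, ∑ x1, e1 i1 x1 = 1)
    (he2 : ∀ i2 x2, 0 ≤ e2 i2 x2) (he2s : ∀ i2, ∑ x2, e2 i2 x2 = 1)
    (hd : ∀ y j1 j2, 0 ≤ d y j1 j2) (hds : ∀ y, ∑ j1, ∑ j2, d y j1 j2 = 1) :
    codeValue W e1 e2 d ≤ 1 := by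
  refine one_div_mul_sum_sum_le_one fun i1 i2 => ?_
  have hd1 : ∀ y, d y i1 i2 ≤ 1 := fun y => hds y ▸
    (single_le_sum (fun j _ => hd y i1 j) (mem_univ i2)).trans
      (single_le_sum (f := fun j1 => ∑ j2, d y j1 j2)
        (fun j1 _ => sum_nonneg fun j2 _ => hd y j1 j2) (mem_univ i1))
  calc _ ≤ ∑ x1, ∑ x2, ∑ y, W x1 x2 y * e1 i1 x1 * e2 i2 x2 := by
        refine sum_le_sum fun x1 _ => sum_le_sum fun x2 _ => sum_le_sum fun y _ => ?_
        exact mul_le_of_le_one_right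
          (mul_nonneg (mul_nonneg (hW.nonneg _ _ _) (he1 _ _)) (he2 _ _)) (hd1 y)
    _ = 1 := sum_mul_mul_eq_one hW.sum_eq_one (he1s i1) (he2s i2)

theorem le_S (hW : IsMAC W)
    (he1 : ∀ i1 x1, 0 ≤ e1 i1 x1) (he1s : ∀ i1, ∑ x1, e1 i1 x1 = 1)
    (he2 : ∀ i2 x2, 0 ≤ e2 i2 x2) (he2s : ∀ i2, ∑ x2, e2 i2 x2 = 1)
    (hd : ∀ y j1 j2, 0 ≤ d y j1 j2) (hds : ∀ y, ∑ j1, ∑ j2, d y j1 j2 = 1) :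
    codeValue W e1 e2 d ≤ S W k1 k2 := by
  refine le_csSup ⟨1, ?_⟩ ⟨e1, e2, d, he1, he1s, he2, he2s, hd, hds, rfl⟩
  rintro _ ⟨e1, e2, d, he1, he1s, he2, he2s, hd, hds, rfl⟩
  exact codeValue_le_one hW he1 he1s he2 he2s hd hds

theorem S_nonneg (hW0 : ∀ x1 x2 y, 0 ≤ W x1 x2 y) : 0 ≤ S W k1 k2 :=
  Real.sSup_nonneg <| by
    rintro _ ⟨e1, e2, d, he1, -, he2, -, hd, -, rfl⟩
    exact codeValue_nonneg hW0 he1 he2 hd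

theorem S_le_one (hW : IsMAC W) :
    S W k1 k2 ≤ 1 :=
  Real.sSup_le (by
    rintro _ ⟨e1, e2, d, he1, he1s, he2, he2s, hd, hds, rfl⟩
    exact codeValue_le_one hW he1 he1s he2 he2s hd hds) zero_le_one

theorem one_div_mul_sum_codebook_le_S (hW : IsMAC W) (c1 : Fin k1 → X1) (c2 : Fin k2 → X2)
    (hd : ∀ y j1 j2, 0 ≤ d y j1 j2) (hds : ∀ y, ∑ j1, ∑ j2, d y j1 j2 = 1) :
    1 / ((k1 : ℝ) * k2) * ∑ j1, ∑ j2, ∑ y, W (c1 j1) (c2 j2) y * d y j1 j2 ≤ S W k1 k2 := by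
  classical
  have := le_S (e1 := fun j x => if c1 j = x then 1 else 0)
    (e2 := fun j x => if c2 j = x then 1 else 0) hW (by intros; positivity) (by simp)
    (by intros; positivity) (by simp) hd hds
  simpa [codeValue] using this

theorem nsValue_eq (P1 : X1 → Fin k1 → Fin k1 → Y → ℝ) (P2 : X2 → Fin k2 → Fin k2 → Y → ℝ) :
    nsValue W P1 P2 = ∑ x1, ∑ x2, ∑ y, W x1 x2 y * (1 / (k1 : ℝ) * ∑ i1, P1 x1 i1 i1 y) *
      (1 / (k2 : ℝ) * ∑ i2, P2 x2 i2 i2 y) := by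
  simp only [nsValue, mul_sum, sum_mul]
  simp_rw [sum_comm (s := (univ : Finset (Fin k1))), sum_comm (s := (univ : Finset (Fin k2)))]
  ring_nf

theorem sum_mul_mul_le_S_add (hW : IsMAC W) {ε1 ε2 : ℝ} {p1 : X1 → ℝ} {g1 : X1 → Y → ℝ}
    {p2 : X2 → ℝ} {g2 : X2 → Y → ℝ} (hpg1 : IsCodingTest ε1 p1 g1) (hε1 : 0 ≤ ε1)
    (hpg2 : IsCodingTest ε2 p2 g2) (hε2 : 0 ≤ ε2) (hk1 : 0 < k1) (hk2 : 0 < k2) :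
    ∑ x1, ∑ x2, ∑ y, W x1 x2 y * (p1 x1 * g1 x1 y) * (p2 x2 * g2 x2 y) ≤
      S W k1 k2 + (((k1 : ℝ) - 1) * ε1 + ((k2 : ℝ) - 1) * ε2) := by
  -- round sender 1 first, treating sender 2's relaxed strategy as part of the channel
  obtain ⟨c1, D1, hD10, hD11, h1⟩ := hpg1.exists_codebook hε1
    (V := fun x1 y => ∑ x2, W x1 x2 y * (p2 x2 * g2 x2 y))
    (fun x1 y => sum_nonneg fun x2 _ => mul_nonneg (hW.nonneg _ _ _)
      (mul_nonneg (hpg2.nonneg _) (hpg2.test_nonneg _ _)))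
    (fun x1 => by
      calc _ ≤ ∑ y, ∑ x2, W x1 x2 y * p2 x2 := by
            gcongr with y _ x2 _
            · exact hW.nonneg _ _ _
            · exact mul_le_of_le_one_right (hpg2.nonneg _) (hpg2.test_le_one _ _)
        _ = 1 := by rw [sum_comm]; simp_rw [← sum_mul, hW.sum_eq_one, one_mul, hpg2.sum_eq_one]) hk1
  obtain ⟨c2, D2, hD20, hD21, h2⟩ := hpg2.exists_codebook hε2
    (V := fun x2 y => 1 / (k1 : ℝ) * ∑ j1, W (c1 j1) x2 y * D1 y j1)
    (fun x2 y => mul_nonneg (by positivity) (sum_nonneg fun j1 _ =>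
      mul_nonneg (hW.nonneg _ _ _) (hD10 _ _)))
    (fun x2 => by
      have hD1 : ∀ y j1, D1 y j1 ≤ 1 := fun y j1 =>
        hD11 y ▸ single_le_sum (fun j _ => hD10 y j) (mem_univ j1)
      rw [← mul_sum, sum_comm]
      exact one_div_mul_sum_le_one fun j1 => (sum_le_sum fun y _ =>
        mul_le_of_le_one_right (hW.nonneg _ _ _) (hD1 y j1)).trans_eq (hW.sum_eq_one _ _)) hk2
  have h3 := one_div_mul_sum_codebook_le_S hW c1 c2
    (d := fun y j1 j2 => D1 y j1 * D2 y j2) (fun y j1 j2 => mul_nonneg (hD10 _ _) (hD20 _ _))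
    (fun y => by simp_rw [← mul_sum, hD21, mul_one, hD11])
  have e1 : ∑ x1, ∑ x2, ∑ y, W x1 x2 y * (p1 x1 * g1 x1 y) * (p2 x2 * g2 x2 y) =
      ∑ x1, ∑ y, (∑ x2, W x1 x2 y * (p2 x2 * g2 x2 y)) * (p1 x1 * g1 x1 y) := by
    simp_rw [sum_mul, sum_comm (s := (univ : Finset X2))]
    exact sum_congr rfl fun _ _ => sum_congr rfl fun _ _ => sum_congr rfl fun _ _ => by ring
  have e2 : 1 / (k1 : ℝ) * ∑ j1, ∑ y, (∑ x2, W (c1 j1) x2 y * (p2 x2 * g2 x2 y)) * D1 y j1 =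
      ∑ x2, ∑ y, (1 / (k1 : ℝ) * ∑ j1, W (c1 j1) x2 y * D1 y j1) * (p2 x2 * g2 x2 y) := by
    simp only [mul_sum, sum_mul]
    simp_rw [sum_comm (s := (univ : Finset (Fin k1))), sum_comm (s := (univ : Finset Y))]
    exact sum_congr rfl fun _ _ => sum_congr rfl fun _ _ => sum_congr rfl fun _ _ => by ring
  have e3 : 1 / (k2 : ℝ) * ∑ j2, ∑ y, (1 / (k1 : ℝ) * ∑ j1, W (c1 j1) (c2 j2) y * D1 y j1) *
      D2 y j2 =
        1 / ((k1 : ℝ) * k2) * ∑ j1, ∑ j2, ∑ y, W (c1 j1) (c2 j2) y * (D1 y j1 * D2 y j2) := by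
    simp only [mul_sum, sum_mul]
    simp_rw [sum_comm (s := (univ : Finset (Fin k1)))]
    exact sum_congr rfl fun _ _ => sum_congr rfl fun _ _ => sum_congr rfl fun _ _ => by ring
  linarith

theorem nsValue_le_S_add (hW : IsMAC W)
    (hk1 : 0 < k1) (hk2 : 0 < k2) {P1 : X1 → Fin k1 → Fin k1 → Y → ℝ}
    {P2 : X2 → Fin k2 → Fin k2 → Y → ℝ} (hP1 : IsNSBox1 k1 P1) (hP2 : IsNSBox1 k2 P2)
    {k1' k2' : ℕ} (hk1' : 0 < k1') (hk2' : 0 < k2') :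
    nsValue W P1 P2 ≤ S W k1' k2' + (((k1' : ℝ) - 1) / k1 + ((k2' : ℝ) - 1) / k2) := by
  rcases isEmpty_or_nonempty Y with hY | hY
  · simpa [nsValue] using add_nonneg (S_nonneg hW.nonneg)
      (add_nonneg (cast_sub_one_div_nonneg hk1') (cast_sub_one_div_nonneg hk2'))
  obtain ⟨p1, g1, hpg1, hr1⟩ := hP1.exists_isCodingTest hk1
  obtain ⟨p2, g2, hpg2, hr2⟩ := hP2.exists_isCodingTest hk2
  rw [nsValue_eq]
  simp_rw [hr1, hr2, div_eq_mul_one_div ((_ : ℝ) - 1)]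
  exact sum_mul_mul_le_S_add hW hpg1 (by positivity) hpg2 (by positivity) hk1' hk2'

theorem SNSsr_le_S_add (hW : IsMAC W)
    (hk1 : 0 < k1) (hk2 : 0 < k2) {k1' k2' : ℕ} (hk1' : 0 < k1') (hk2' : 0 < k2') :
    SNSsr W k1 k2 ≤ S W k1' k2' + (((k1' : ℝ) - 1) / k1 + ((k2' : ℝ) - 1) / k2) := by
  refine Real.sSup_le ?_ (add_nonneg (S_nonneg hW.nonneg)
    (add_nonneg (cast_sub_one_div_nonneg hk1') (cast_sub_one_div_nonneg hk2')))
  rintro _ ⟨P1, P2, hP1, hP2, rfl⟩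
  exact nsValue_le_S_add hW hk1 hk2 hP1 hP2 hk1' hk2'

theorem nsValue_le_one (hW : IsMAC W)
    (hk1 : 0 < k1) (hk2 : 0 < k2) {P1 : X1 → Fin k1 → Fin k1 → Y → ℝ}
    {P2 : X2 → Fin k2 → Fin k2 → Y → ℝ} (hP1 : IsNSBox1 k1 P1) (hP2 : IsNSBox1 k2 P2) :
    nsValue W P1 P2 ≤ 1 := by
  simpa using (nsValue_le_S_add hW hk1 hk2 hP1 hP2 one_pos one_pos).trans
    (add_le_add_left (S_le_one hW) _)

theorem SNSsr_le_one (hW : IsMAC W)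
    (hk1 : 0 < k1) (hk2 : 0 < k2) : SNSsr W k1 k2 ≤ 1 :=
  Real.sSup_le (by
    rintro _ ⟨P1, P2, hP1, hP2, rfl⟩
    exact nsValue_le_one hW hk1 hk2 hP1 hP2) zero_le_one

theorem le_SNSsr (hW : IsMAC W)
    (hk1 : 0 < k1) (hk2 : 0 < k2) {P1 : X1 → Fin k1 → Fin k1 → Y → ℝ}
    {P2 : X2 → Fin k2 → Fin k2 → Y → ℝ} (hP1 : IsNSBox1 k1 P1) (hP2 : IsNSBox1 k2 P2) :
    nsValue W P1 P2 ≤ SNSsr W k1 k2 := by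
  refine le_csSup ⟨1, ?_⟩ ⟨P1, P2, hP1, hP2, rfl⟩
  rintro _ ⟨P1, P2, hP1, hP2, rfl⟩
  exact nsValue_le_one hW hk1 hk2 hP1 hP2

theorem two_mul_codeValue_sub_one_le_nsValue (hW : IsMAC W) (he1 : ∀ i1 x1, 0 ≤ e1 i1 x1)
    (he1s : ∀ i1, ∑ x1, e1 i1 x1 = 1) (he2 : ∀ i2 x2, 0 ≤ e2 i2 x2)
    (he2s : ∀ i2, ∑ x2, e2 i2 x2 = 1) (hd : ∀ y j1 j2, 0 ≤ d y j1 j2) :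
    2 * codeValue W e1 e2 d - 1 ≤ nsValue W (fun x1 j1 i1 y => e1 i1 x1 * ∑ j2, d y j1 j2)
      (fun x2 j2 i2 y => e2 i2 x2 * ∑ j1, d y j1 j2) := by
  have hinputs := one_div_mul_sum_sum_le_one fun i1 i2 =>
    (sum_mul_mul_eq_one hW.sum_eq_one (he1s i1) (he2s i2)).le
  calc _ ≤ 2 * codeValue W e1 e2 d - 1 / ((k1 : ℝ) * k2) * ∑ i1, ∑ i2, ∑ x1, ∑ x2, ∑ y,
        W x1 x2 y * e1 i1 x1 * e2 i2 x2 := by linarith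
    _ = 1 / ((k1 : ℝ) * k2) * ∑ i1, ∑ i2, ∑ x1, ∑ x2, ∑ y,
        W x1 x2 y * e1 i1 x1 * e2 i2 x2 * (2 * d y i1 i2 - 1) := by
      have h2 : ∀ a b : ℝ, a * (2 * b - 1) = 2 * (a * b) - a := fun a b => by ring
      simp only [h2, sum_sub_distrib, ← mul_sum, codeValue]
      ring
    _ ≤ _ := by
      refine mul_le_mul_of_nonneg_left (sum_le_sum fun i1 _ => sum_le_sum fun i2 _ =>
        sum_le_sum fun x1 _ => sum_le_sum fun x2 _ => sum_le_sum fun y _ => ?_) (by positivity)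
      have hd1 : d y i1 i2 ≤ ∑ j2, d y i1 j2 := single_le_sum (fun j _ => hd y i1 j) (mem_univ _)
      have hd2 : d y i1 i2 ≤ ∑ j1, d y j1 i2 := single_le_sum (fun j _ => hd y j i2) (mem_univ _)
      -- both marginals of the receiver's guess dominate the joint guess, and `2 t - 1 ≤ t ^ 2`
      have key : 2 * d y i1 i2 - 1 ≤ (∑ j2, d y i1 j2) * ∑ j1, d y j1 i2 := by
        nlinarith [mul_le_mul hd1 hd2 (hd y i1 i2) ((hd y i1 i2).trans hd1),
          sq_nonneg (d y i1 i2 - 1)]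
      calc _ ≤ W x1 x2 y * e1 i1 x1 * e2 i2 x2 * ((∑ j2, d y i1 j2) * ∑ j1, d y j1 i2) :=
            mul_le_mul_of_nonneg_left key
              (mul_nonneg (mul_nonneg (hW.nonneg _ _ _) (he1 _ _)) (he2 _ _))
        _ = _ := by dsimp only; ring

theorem SNSsr_nonneg (hW0 : ∀ x1 x2 y, 0 ≤ W x1 x2 y) : 0 ≤ SNSsr W k1 k2 := by
  refine Real.sSup_nonneg ?_
  rintro _ ⟨P1, P2, hP1, hP2, rfl⟩
  refine mul_nonneg (by positivity) (sum_nonneg fun i1 _ => sum_nonneg fun i2 _ =>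
    sum_nonneg fun x1 _ => sum_nonneg fun x2 _ => sum_nonneg fun y _ => ?_)
  exact mul_nonneg (mul_nonneg (hW0 _ _ _) (hP1.1 _ _ _ _)) (hP2.1 _ _ _ _)

theorem two_mul_S_sub_one_le_SNSsr (hW : IsMAC W) (hk1 : 0 < k1) (hk2 : 0 < k2) :
    2 * S W k1 k2 - 1 ≤ SNSsr W k1 k2 := by
  suffices S W k1 k2 ≤ (SNSsr W k1 k2 + 1) / 2 by linarith
  refine Real.sSup_le ?_ (by linarith [SNSsr_nonneg (k1 := k1) (k2 := k2) hW.nonneg])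
  rintro _ ⟨e1, e2, d, he1, he1s, he2, he2s, hd, hds, rfl⟩
  have hds' : ∀ y, ∑ j2, ∑ j1, d y j1 j2 = 1 := fun y => sum_comm.trans (hds y)
  have := (two_mul_codeValue_sub_one_le_nsValue hW he1 he1s he2 he2s hd).trans
    (le_SNSsr hW hk1 hk2
      (isNSBox1_mul he1 he1s (fun y j1 => sum_nonneg fun j2 _ => hd y j1 j2) hds)
      (isNSBox1_mul he2 he2s (fun y j2 => sum_nonneg fun j1 _ => hd y j1 j2) hds'))
  change codeValue W e1 e2 d ≤ _
  linarith

end MultipleAccess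

theorem nMsg_pos (R : ℝ) (n : ℕ) : 0 < nMsg R n :=
  Nat.ceil_pos.mpr (Real.rpow_pos_of_pos two_pos _)

theorem cast_nMsg_sub_one_div_le (R δ : ℝ) (n : ℕ) :
    ((nMsg (R - δ) n : ℝ) - 1) / nMsg R n ≤ ((2 : ℝ) ^ (-δ)) ^ n := by
  have hnum : (nMsg (R - δ) n : ℝ) - 1 ≤ (2 : ℝ) ^ ((R - δ) * n) := by
    have := Nat.ceil_lt_add_one (Real.rpow_pos_of_pos two_pos ((R - δ) * n)).le
    rw [nMsg]
    linarith
  calc _ ≤ (2 : ℝ) ^ ((R - δ) * n) / (2 : ℝ) ^ (R * n) :=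
        div_le_div₀ (Real.rpow_pos_of_pos two_pos _).le hnum (Real.rpow_pos_of_pos two_pos _)
          (Nat.le_ceil _)
    _ = ((2 : ℝ) ^ (-δ)) ^ n := by
        rw [← Real.rpow_sub two_pos, ← Real.rpow_natCast, ← Real.rpow_mul zero_le_two]
        ring_nf

section Asymptotics

variable {X1 X2 Y : Type*} [Fintype X1] [Fintype X2] [Fintype Y] {W : X1 → X2 → Y → ℝ}

theorem tendsto_SNSsr_of_tendsto_S (hW : IsMAC W) {R1 R2 : ℝ}
    (h : Tendsto (fun n => S (macPow n W) (nMsg R1 n) (nMsg R2 n)) atTop (𝓝 1)) :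
    Tendsto (fun n => SNSsr (macPow n W) (nMsg R1 n) (nMsg R2 n)) atTop (𝓝 1) := by
  have hlow := (h.const_mul 2).sub_const 1
  norm_num at hlow
  exact tendsto_of_tendsto_of_tendsto_of_le_of_le hlow tendsto_const_nhds
    (fun n => two_mul_S_sub_one_le_SNSsr (hW.macPow n)
      (nMsg_pos _ _) (nMsg_pos _ _))
    (fun n => SNSsr_le_one (hW.macPow n) (nMsg_pos _ _) (nMsg_pos _ _))

theorem tendsto_S_of_tendsto_SNSsr (hW : IsMAC W) {R1 R2 δ : ℝ} (hδ : 0 < δ)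
    (h : Tendsto (fun n => SNSsr (macPow n W) (nMsg R1 n) (nMsg R2 n)) atTop (𝓝 1)) :
    Tendsto (fun n => S (macPow n W) (nMsg (R1 - δ) n) (nMsg (R2 - δ) n)) atTop (𝓝 1) := by
  have hgeo : Tendsto (fun n : ℕ => ((2 : ℝ) ^ (-δ)) ^ n) atTop (𝓝 0) :=
    tendsto_pow_atTop_nhds_zero_of_lt_one (by positivity)
      (Real.rpow_lt_one_of_one_lt_of_neg one_lt_two (neg_neg_of_pos hδ))
  have hlow := h.sub (hgeo.add hgeo)
  norm_num at hlow
  refine tendsto_of_tendsto_of_tendsto_of_le_of_le hlow tendsto_const_nhds (fun n => ?_)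
    (fun n => S_le_one (hW.macPow n))
  have := SNSsr_le_S_add (hW.macPow n) (nMsg_pos R1 n)
    (nMsg_pos R2 n) (nMsg_pos (R1 - δ) n) (nMsg_pos (R2 - δ) n)
  dsimp only
  linarith [cast_nMsg_sub_one_div_le R1 δ n, cast_nMsg_sub_one_div_le R2 δ n]

end Asymptotics

/-- Independent non-signaling assistance (shared only between each sender and the
receiver separately) does not change the capacity region: `C^{NS_SR}(W) = C(W)`. -/
theorem capacityRegionNSsr_eq_capacityRegion {X1 X2 Y : Type*}
    [Fintype X1] [Fintype X2] [Fintype Y]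
    (W : X1 → X2 → Y → ℝ)
    (hW0 : ∀ x1 x2 y, 0 ≤ W x1 x2 y)
    (hW1 : ∀ x1 x2, ∑ y, W x1 x2 y = 1) :
    capacityRegionNSsr W = capacityRegion W := by
  have hW : IsMAC W := ⟨hW0, hW1⟩
  refine (closure_minimal (fun R hR => ?_) isClosed_closure).antisymm
    (closure_mono fun R hR => tendsto_SNSsr_of_tendsto_S hW hR)
  have hlim : Tendsto (fun δ : ℝ => (R.1 - δ, R.2 - δ)) (𝓝[>] 0) (𝓝 R) :=
    tendsto_nhdsWithin_of_tendsto_nhds <| by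
      simpa using ((continuous_const.sub continuous_id).prodMk
        (continuous_const.sub continuous_id)).tendsto (0 : ℝ)
  exact mem_closure_of_tendsto hlim <| eventually_mem_nhdsWithin.mono fun δ hδ =>
    tendsto_S_of_tendsto_SNSsr hW hδ hR
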